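/- arXiv:2406.07452 — 3 statements merged into one kernel-verified Lean document; each statement's English description precedes it below -/
import Mathlib

section
/- There exist a compact Hausdorff space K and an ω-Corson compact space L such that there is a linear map T : C_p(K) → C_p(L) which is a homeomorphism onto its image, but K is not Eberlein compact. -/
universe u

/-- The submodule of `X → ℝ` consisting of continuous functions. With the subspace
topology inherited from the product topology on `X → ℝ`, this is `C_p(X)`,
the space of continuous real functions with the topology of pointwise convergence. -/
def cpSubmodule (X : Type u) [TopologicalSpace X] : Submodule ℝ (X → ℝ) where
  carrier := {f | Continuous f}
  add_mem' hf hg := hf.add hg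
  zero_mem' := continuous_const
  smul_mem' := fun c {_} hf => hf.const_smul c

/-- `C_p(X)`: continuous real-valued functions on `X` with the pointwise convergence
topology (subspace of the product `X → ℝ`), as a topological real vector space. -/
abbrev Cp (X : Type u) [TopologicalSpace X] : Type u := ↥(cpSubmodule X)

/-- A space is `κ`-Corson compact if it is a compact Hausdorff space homeomorphic to a
subspace of `Σ_κ(ℝ^Γ) = {x ∈ ℝ^Γ : |{γ : x γ ≠ 0}| < κ}` (with the topology of pointwise
convergence) for some index set `Γ`. For `κ = ℵ₀` this is ω-Corson compactness. -/
def IsKappaCorson (κ : Cardinal.{u}) (K : Type u) [TopologicalSpace K] : Prop :=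
  CompactSpace K ∧ T2Space K ∧
    ∃ (Γ : Type u) (f : K → Γ → ℝ),
      Topology.IsEmbedding f ∧ ∀ k, Cardinal.mk ↥{γ | f k γ ≠ 0} < κ

/-- A space is Eberlein compact if it is a compact Hausdorff space homeomorphic to a
subspace of `c₀(Γ) = {x ∈ ℝ^Γ : ∀ ε > 0, {γ : ε ≤ |x γ|} is finite}` (with the topology
of pointwise convergence) for some index set `Γ`. -/
def IsEberleinCompact (K : Type u) [TopologicalSpace K] : Prop :=
  CompactSpace K ∧ T2Space K ∧
    ∃ (Γ : Type u) (f : K → Γ → ℝ),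
      Topology.IsEmbedding f ∧ ∀ k, ∀ ε > (0 : ℝ), {γ | ε ≤ |f k γ|}.Finite

open Filter Topology Set
open scoped Classical

noncomputable section

abbrev BB := ℕ → Bool

def br (x : BB) (k : ℕ) : ℕ := Encodable.encode (List.ofFn (fun i : Fin k => x i))

lemma br_eq {x y : BB} {k j : ℕ} (h : br x k = br y j) :
    k = j ∧ ∀ i : Fin k, x i = y i := by
  have h' : List.ofFn (fun i : Fin k => x i) = List.ofFn (fun i : Fin j => y i) :=
    Encodable.encode_injective h
  have hk : k = j := by
    have := congrArg List.length h'
    simpa using this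
  subst hk
  refine ⟨rfl, fun i => ?_⟩
  have := List.ofFn_injective h'
  exact congrFun this i

def Amem (n : ℕ) (y : BB) : Prop := ∃ k, br y k = n

lemma amem_br (x : BB) (k : ℕ) : Amem (br x k) x := ⟨k, rfl⟩

lemma br_inj (x : BB) : Function.Injective (br x) := fun _ _ h => (br_eq h).1

lemma eventually_not_amem {x y : BB} (h : y ≠ x) :
    ∀ᶠ k in atTop, ¬ Amem (br x k) y := by
  obtain ⟨k₀, hk₀⟩ : ∃ k₀, y k₀ ≠ x k₀ := by
    by_contra h'; push_neg at h'; exact h (funext h')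
  refine eventually_atTop.2 ⟨k₀ + 1, fun k hk ⟨j, hj⟩ => ?_⟩
  obtain ⟨hkj, hiy⟩ := br_eq hj
  subst hkj
  exact hk₀ (hiy ⟨k₀, by omega⟩)

lemma ad_finite {x y : BB} (h : x ≠ y) : {n | Amem n x ∧ Amem n y}.Finite := by
  obtain ⟨N, hN⟩ := eventually_atTop.1 (eventually_not_amem (x := x) (y := y) (Ne.symm h))
  have hsub : {n | Amem n x ∧ Amem n y} ⊆ (fun k => br x k) '' (Set.Iio N) := by
    rintro n ⟨⟨k, hk⟩, hy⟩
    subst hk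
    by_contra hmem
    have hkN : N ≤ k := by
      by_contra hlt
      exact hmem ⟨k, by simpa using Nat.lt_of_not_le hlt, rfl⟩
    exact hN k hkN hy
  exact ((Set.finite_Iio N).image _).subset hsub

abbrev J := ℕ ⊕ BB

def pp : J → J → ℝ
  | Sum.inl n => fun i =>
    match i with
    | Sum.inl m => if n = m then ((n : ℝ) + 1)⁻¹ else 0
    | Sum.inr y => if Amem n y then 1 else 0
  | Sum.inr x => fun i =>
    match i with
    | Sum.inl _ => 0
    | Sum.inr y => if x = y then 1 else 0

lemma pp_inl_inl (n m : ℕ) : pp (Sum.inl n) (Sum.inl m) = if n = m then ((n : ℝ) + 1)⁻¹ else 0 := rfl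
lemma pp_inl_inr (n : ℕ) (y : BB) : pp (Sum.inl n) (Sum.inr y) = if Amem n y then 1 else 0 := rfl
lemma pp_inr_inl (x : BB) (m : ℕ) : pp (Sum.inr x) (Sum.inl m) = 0 := rfl
lemma pp_inr_inr (x y : BB) : pp (Sum.inr x) (Sum.inr y) = if x = y then 1 else 0 := rfl

lemma inv_succ_pos (n : ℕ) : (0 : ℝ) < ((n : ℝ) + 1)⁻¹ := by positivity

lemma inv_succ_ne (n : ℕ) : ((n : ℝ) + 1)⁻¹ ≠ 0 := ne_of_gt (inv_succ_pos n)

def Kset : Set (J → ℝ) := Set.range pp ∪ {0}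

lemma pp_ne_zero (j : J) : pp j ≠ 0 := by
  cases j with
  | inl n =>
    intro h
    have := congrFun h (Sum.inl n)
    rw [pp_inl_inl, if_pos rfl] at this
    exact inv_succ_ne n this
  | inr x =>
    intro h
    have := congrFun h (Sum.inr x)
    rw [pp_inr_inr, if_pos rfl] at this
    exact one_ne_zero this

lemma pp_inj : Function.Injective pp := by
  intro a b hab
  cases a with
  | inl n =>
    cases b with
    | inl m =>
      by_contra hne
      have hnm : n ≠ m := by intro h; exact hne (by rw [h])
      have := congrFun hab (Sum.inl n)
      rw [pp_inl_inl, pp_inl_inl, if_pos rfl, if_neg (Ne.symm hnm)] at this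
      exact inv_succ_ne n this
    | inr x =>
      have := congrFun hab (Sum.inl n)
      rw [pp_inl_inl, pp_inr_inl, if_pos rfl] at this
      exact absurd this (inv_succ_ne n)
  | inr x =>
    cases b with
    | inl m =>
      have := congrFun hab (Sum.inl m)
      rw [pp_inl_inl, pp_inr_inl, if_pos rfl] at this
      exact absurd this.symm (inv_succ_ne m)
    | inr y =>
      by_contra hne
      have hxy : x ≠ y := by intro h; exact hne (by rw [h])
      have := congrFun hab (Sum.inr y)
      rw [pp_inr_inr, pp_inr_inr, if_pos rfl, if_neg hxy] at this
      exact one_ne_zero this.symm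

lemma ultra_const {α : Type} (u : Ultrafilter α) {g : α → ℝ} {c z : ℝ}
    (hg : {a | g a = c} ∈ u) (hz : Tendsto g u (𝓝 z)) : z = c := by
  have : Tendsto (fun _ : α => c) u (𝓝 z) := by
    refine hz.congr' ?_
    exact eventually_of_mem hg (fun a ha => ha)
  exact tendsto_nhds_unique this tendsto_const_nhds

/-- The key structure theorem : `Kset` is closed. -/
lemma isClosed_Kset : IsClosed Kset := by
  rw [← closure_subset_iff_isClosed]
  intro z hz
  obtain ⟨u, hmem, hle⟩ := mem_closure_iff_ultrafilter.1 hz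
  rcases (u.mem_or_compl_mem {0}) with h0 | h0
  · right
    have hmeet : ∀ s ∈ 𝓝 z, ((0 : J → ℝ)) ∈ s := by
      intro s hs
      have : s ∩ {0} ∈ u := inter_mem (hle hs) h0
      obtain ⟨w, hw1, hw2⟩ := u.nonempty_of_mem this
      simp only [Set.mem_singleton_iff] at hw2
      subst hw2; exact hw1
    have hz0 : z ∈ closure ({0} : Set (J → ℝ)) :=
      mem_closure_iff_nhds.2 fun s hs => ⟨0, hmeet s hs, rfl⟩
    simpa using hz0
  · have hrange : Set.range pp ∈ u := by
      have : Kset ∩ {0}ᶜ ∈ u := inter_mem hmem h0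
      refine mem_of_superset this ?_
      rintro w ⟨hw1, hw2⟩
      rcases hw1 with h | h
      · exact h
      · exact absurd h hw2
    set v := u.comap pp_inj hrange with hv
    have htend : Tendsto pp (v : Filter J) (𝓝 z) := by
      have h1 : Filter.map pp (v : Filter J) ≤ u := by
        rw [hv, Ultrafilter.coe_comap]
        exact Filter.map_comap_le
      exact h1.trans hle
    have hcoord : ∀ i : J, Tendsto (fun j => pp j i) (v : Filter J) (𝓝 (z i)) := by
      intro i
      exact (tendsto_pi_nhds.1 htend) i
    by_cases hprin : ∃ j₀ : J, {j₀} ∈ v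
    · obtain ⟨j₀, hj₀⟩ := hprin
      left
      refine ⟨j₀, ?_⟩
      funext i
      exact (ultra_const v (g := fun j => pp j i) (c := pp j₀ i)
        (mem_of_superset hj₀ (by rintro j rfl; rfl)) (hcoord i)).symm ▸ rfl
    · push_neg at hprin
      have hfin : ∀ s : Set J, s.Finite → s ∉ v := by
        intro s hs hmem'
        obtain ⟨a, _, ha⟩ := Ultrafilter.eq_pure_of_finite_mem hs hmem'
        exact hprin a (by rw [ha]; exact rfl)
      -- coordinates inl m are 0
      have hzl : ∀ m : ℕ, z (Sum.inl m) = 0 := by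
        intro m
        refine ultra_const v (hz := hcoord (Sum.inl m)) ?_
        have : ({Sum.inl m} : Set J)ᶜ ∈ v :=
          (v.compl_mem_iff_notMem).2 (by intro h; exact hfin _ (Set.finite_singleton _) h)
        refine mem_of_superset this ?_
        intro j hj
        cases j with
        | inl n =>
          have : n ≠ m := by
            intro h; subst h; exact hj rfl
          simp only [Set.mem_setOf_eq, pp_inl_inl, if_neg this]
        | inr x => exact pp_inr_inl x m
      -- for each y : BB, coordinate is 0 or 1 according to E_y ∈ v
      set E : BB → Set J := fun y => {j | pp j (Sum.inr y) = 1} with hE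
      have hzcases : ∀ y : BB, (E y ∈ v ∧ z (Sum.inr y) = 1) ∨ (E y ∉ v ∧ z (Sum.inr y) = 0) := by
        intro y
        rcases v.mem_or_compl_mem (E y) with h | h
        · left
          exact ⟨h, ultra_const v (hz := hcoord (Sum.inr y)) h⟩
        · right
          refine ⟨(v.compl_mem_iff_notMem).1 h, ultra_const v (hz := hcoord (Sum.inr y)) ?_⟩
          refine mem_of_superset h ?_
          intro j hj
          simp only [hE, Set.mem_compl_iff, Set.mem_setOf_eq] at hj
          cases j with
          | inl n =>
            rw [Set.mem_setOf_eq, pp_inl_inr]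
            rw [pp_inl_inr] at hj
            by_cases ha : Amem n y
            · rw [if_pos ha] at hj; exact absurd rfl hj
            · rw [if_neg ha]
          | inr x =>
            rw [Set.mem_setOf_eq, pp_inr_inr]
            rw [pp_inr_inr] at hj
            by_cases ha : x = y
            · rw [if_pos ha] at hj; exact absurd rfl hj
            · rw [if_neg ha]
      -- at most one y with E y ∈ v
      by_cases hex : ∃ y : BB, E y ∈ v
      · obtain ⟨y₀, hy₀⟩ := hex
        left
        refine ⟨Sum.inr y₀, ?_⟩
        funext i
        cases i with
        | inl m => rw [pp_inr_inl, hzl m]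
        | inr y =>
          rw [pp_inr_inr]
          by_cases hyy : y₀ = y
          · subst hyy
            rw [if_pos rfl]
            exact ((hzcases y₀).resolve_right (fun h => h.1 hy₀)).2.symm
          · rw [if_neg hyy]
            rcases hzcases y with h | h
            · exfalso
              have hinter : E y₀ ∩ E y ∈ v := inter_mem hy₀ h.1
              refine hfin _ ?_ hinter
              have hsub : E y₀ ∩ E y ⊆ Sum.inl '' {n | Amem n y₀ ∧ Amem n y} := by
                rintro j ⟨hj1, hj2⟩
                simp only [hE, Set.mem_setOf_eq] at hj1 hj2
                cases j with
                | inl n =>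
                  rw [pp_inl_inr] at hj1 hj2
                  by_cases h1 : Amem n y₀
                  · by_cases h2 : Amem n y
                    · exact ⟨n, ⟨h1, h2⟩, rfl⟩
                    · rw [if_neg h2] at hj2; exact absurd hj2 (by norm_num)
                  · rw [if_neg h1] at hj1; exact absurd hj1 (by norm_num)
                | inr x =>
                  rw [pp_inr_inr] at hj1 hj2
                  by_cases h1 : x = y₀
                  · by_cases h2 : x = y
                    · exact absurd (h1.symm.trans h2) hyy
                    · rw [if_neg h2] at hj2; exact absurd hj2 (by norm_num)
                  · rw [if_neg h1] at hj1; exact absurd hj1 (by norm_num)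
              exact ((ad_finite (fun hcontr => hyy (by rw [hcontr]))).image _).subset hsub
            · exact h.2.symm
      · push_neg at hex
        right
        have : z = 0 := by
          funext i
          cases i with
          | inl m => exact hzl m
          | inr y =>
            rcases hzcases y with h | h
            · exact absurd h.1 (hex y)
            · exact h.2
        simp [this]


lemma pp_mem_Icc (j i : J) : pp j i ∈ Set.Icc (0:ℝ) 1 := by
  cases j with
  | inl n =>
    cases i with
    | inl m =>
      rw [pp_inl_inl]
      by_cases h : n = m
      · rw [if_pos h]
        constructor
        · exact le_of_lt (inv_succ_pos n)
        · rw [inv_le_one_iff₀]; right; linarith [Nat.cast_nonneg (α := ℝ) n]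
      · rw [if_neg h]; exact ⟨le_refl 0, zero_le_one⟩
    | inr y =>
      rw [pp_inl_inr]
      by_cases h : Amem n y
      · rw [if_pos h]; exact ⟨zero_le_one, le_refl 1⟩
      · rw [if_neg h]; exact ⟨le_refl 0, zero_le_one⟩
  | inr x =>
    cases i with
    | inl m => rw [pp_inr_inl]; exact ⟨le_refl 0, zero_le_one⟩
    | inr y =>
      rw [pp_inr_inr]
      by_cases h : x = y
      · rw [if_pos h]; exact ⟨zero_le_one, le_refl 1⟩
      · rw [if_neg h]; exact ⟨le_refl 0, zero_le_one⟩

lemma isCompact_Kset : IsCompact Kset := by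
  refine IsCompact.of_isClosed_subset (isCompact_univ_pi (fun _ : J => isCompact_Icc (a := (0:ℝ)) (b := 1))) isClosed_Kset ?_
  rintro w (⟨j, rfl⟩ | hw)
  · intro i _
    exact pp_mem_Icc j i
  · simp only [Set.mem_singleton_iff] at hw
    subst hw
    intro i _
    exact ⟨le_refl 0, zero_le_one⟩

abbrev KK := ↥Kset

instance : CompactSpace KK := isCompact_iff_compactSpace.1 isCompact_Kset

example : T2Space KK := inferInstance

def PN (n : ℕ) : KK := ⟨pp (Sum.inl n), Or.inl ⟨_, rfl⟩⟩
def PX (x : BB) : KK := ⟨pp (Sum.inr x), Or.inl ⟨_, rfl⟩⟩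
def Pinf : KK := ⟨0, Or.inr rfl⟩

lemma eventually_ne_of_injective {α : Type*} {f : ℕ → α} (hf : Function.Injective f) (a : α) :
    ∀ᶠ k in atTop, f k ≠ a := by
  by_cases h : ∃ k₀, f k₀ = a
  · obtain ⟨k₀, hk₀⟩ := h
    refine eventually_atTop.2 ⟨k₀ + 1, fun k hk hfa => ?_⟩
    have : k = k₀ := hf (hfa.trans hk₀.symm)
    omega
  · push_neg at h
    exact Eventually.of_forall h

lemma tendsto_PN_br (x : BB) : Tendsto (fun k => PN (br x k)) atTop (𝓝 (PX x)) := by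
  rw [tendsto_subtype_rng]
  rw [tendsto_pi_nhds]
  intro i
  cases i with
  | inl m =>
    show Tendsto (fun k => pp (Sum.inl (br x k)) (Sum.inl m)) atTop (𝓝 (pp (Sum.inr x) (Sum.inl m)))
    rw [pp_inr_inl]
    refine Tendsto.congr' ?_ tendsto_const_nhds
    filter_upwards [eventually_ne_of_injective (br_inj x) m] with k hk
    exact (by rw [pp_inl_inl, if_neg hk] : pp (Sum.inl (br x k)) (Sum.inl m) = 0).symm
  | inr y =>
    by_cases hxy : x = y
    · subst hxy
      show Tendsto (fun k => pp (Sum.inl (br x k)) (Sum.inr x)) atTop (𝓝 (pp (Sum.inr x) (Sum.inr x)))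
      rw [pp_inr_inr, if_pos rfl]
      refine Tendsto.congr' ?_ tendsto_const_nhds
      filter_upwards with k
      exact (by rw [pp_inl_inr, if_pos (amem_br x k)] : pp (Sum.inl (br x k)) (Sum.inr x) = 1).symm
    · show Tendsto (fun k => pp (Sum.inl (br x k)) (Sum.inr y)) atTop (𝓝 (pp (Sum.inr x) (Sum.inr y)))
      rw [pp_inr_inr, if_neg hxy]
      refine Tendsto.congr' ?_ tendsto_const_nhds
      filter_upwards [eventually_not_amem (x := x) (y := y) (fun h => hxy h.symm)] with k hk
      exact (by rw [pp_inl_inr, if_neg hk] : pp (Sum.inl (br x k)) (Sum.inr y) = 0).symm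

lemma tendsto_PX_injective {xs : ℕ → BB} (hinj : Function.Injective xs) :
    Tendsto (fun k => PX (xs k)) atTop (𝓝 Pinf) := by
  rw [tendsto_subtype_rng]
  rw [tendsto_pi_nhds]
  intro i
  cases i with
  | inl m =>
    show Tendsto (fun k => pp (Sum.inr (xs k)) (Sum.inl m)) atTop (𝓝 ((0 : J → ℝ) (Sum.inl m)))
    refine Tendsto.congr' ?_ tendsto_const_nhds
    filter_upwards with k
    exact (pp_inr_inl (xs k) m).symm
  | inr y =>
    show Tendsto (fun k => pp (Sum.inr (xs k)) (Sum.inr y)) atTop (𝓝 ((0 : J → ℝ) (Sum.inr y)))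
    refine Tendsto.congr' ?_ tendsto_const_nhds
    filter_upwards [eventually_ne_of_injective hinj y] with k hk
    exact (by rw [pp_inr_inr, if_neg hk] : pp (Sum.inr (xs k)) (Sum.inr y) = 0).symm

/-- key finiteness: continuous functions almost vanish at the `PX x` relative to `Pinf`. -/
lemma finite_big_x {g : KK → ℝ} (hg : Continuous g) {ε : ℝ} (hε : 0 < ε) :
    {x : BB | ε ≤ |g (PX x) - g Pinf|}.Finite := by
  by_contra hinf
  have hinf' : {x : BB | ε ≤ |g (PX x) - g Pinf|}.Infinite := hinf
  set e := hinf'.natEmbedding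
  have hinj : Function.Injective (fun k => (e k : BB)) := fun a b h => e.injective (Subtype.ext h)
  have htt : Tendsto (fun k => g (PX (e k)) - g Pinf) atTop (𝓝 0) := by
    have h1 : Tendsto (fun k => g (PX (e k))) atTop (𝓝 (g Pinf)) :=
      (hg.tendsto Pinf).comp (tendsto_PX_injective hinj)
    have := h1.sub (tendsto_const_nhds (x := g Pinf) (f := atTop))
    simpa using this
  have habs : Tendsto (fun k => |g (PX (e k)) - g Pinf|) atTop (𝓝 0) := by
    have := htt.abs
    simpa using this
  have : ε ≤ 0 := ge_of_tendsto habs (Eventually.of_forall fun k => (e k).2)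
  exact absurd this (not_le.2 hε)


/-! ## The ω-Corson compact space L -/

abbrev Γt := BB ⊕ (ℕ ⊕ Unit)

instance : TopologicalSpace Γt := ⊥
instance : DiscreteTopology Γt := ⟨rfl⟩

abbrev LL := OnePoint Γt

open scoped OnePoint

def ee : LL → Γt → ℝ := fun ℓ γ' =>
  match ℓ with
  | none => 0
  | some γ => if γ = γ' then 1 else 0

lemma ee_infty (γ' : Γt) : ee ∞ γ' = 0 := rfl
lemma ee_coe (γ γ' : Γt) : ee (γ : LL) γ' = if γ = γ' then 1 else 0 := rfl

lemma coe_LL_ne_infty (γ : Γt) : (γ : LL) ≠ ∞ := by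
  exact Option.some_ne_none γ

lemma ee_inj : Function.Injective ee := by
  intro a b hab
  induction a using OnePoint.rec with
  | infty =>
    induction b using OnePoint.rec with
    | infty => rfl
    | coe γ =>
      have := congrFun hab γ
      rw [ee_infty, ee_coe, if_pos rfl] at this
      exact absurd this.symm one_ne_zero
  | coe γ =>
    induction b using OnePoint.rec with
    | infty =>
      have := congrFun hab γ
      rw [ee_infty, ee_coe, if_pos rfl] at this
      exact absurd this one_ne_zero
    | coe γ' =>
      by_cases h : γ = γ'
      · rw [h]
      · have := congrFun hab γ
        rw [ee_coe, ee_coe, if_pos rfl, if_neg (fun hh => h hh.symm)] at this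
        exact absurd this one_ne_zero

lemma tendsto_ee_cofinite : Tendsto (fun γ : Γt => ee (γ : LL)) cofinite (𝓝 0) := by
  rw [tendsto_pi_nhds]
  intro γ'
  refine Tendsto.congr' ?_ (tendsto_const_nhds (x := (0:ℝ)))
  have : {γ'}ᶜ ∈ (cofinite : Filter Γt) := by
    rw [mem_cofinite]
    simp
  filter_upwards [this] with γ hγ
  rw [ee_coe, if_neg (by simpa using hγ)]

lemma continuous_ee : Continuous ee := by
  rw [OnePoint.continuous_iff_from_discrete]
  exact tendsto_ee_cofinite

lemma isEmbedding_ee : Topology.IsEmbedding ee := by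
  refine ⟨Topology.isInducing_iff_nhds.2 fun ℓ => ?_, ee_inj⟩
  induction ℓ using OnePoint.rec with
  | infty =>
    refine le_antisymm ?_ ?_
    · rw [← tendsto_iff_comap]
      exact continuous_ee.tendsto _
    · rw [OnePoint.le_nhds_infty]
      intro s hsc hscomp
      have hsfin : s.Finite := hscomp.finite_of_discrete
      have htmem : {w : Γt → ℝ | ∀ γ ∈ s, |w γ| < 1} ∈ 𝓝 (ee ∞) := by
        have hset : {w : Γt → ℝ | ∀ γ ∈ s, |w γ| < 1}
            = ⋂ γ ∈ s, (fun w : Γt → ℝ => w γ) ⁻¹' (Metric.ball 0 1) := by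
          ext w
          simp [Real.dist_eq]
        rw [hset]
        refine (Filter.biInter_mem hsfin).2 fun γ hγ => ?_
        refine (continuous_apply γ).continuousAt.preimage_mem_nhds ?_
        rw [show ee ∞ γ = 0 from rfl]
        exact Metric.ball_mem_nhds 0 one_pos
      refine mem_of_superset (preimage_mem_comap htmem) ?_
      intro ℓ hℓ
      induction ℓ using OnePoint.rec with
      | infty => right; rfl
      | coe γ₀ =>
        left
        refine ⟨γ₀, ?_, rfl⟩
        intro hγ₀
        have := hℓ γ₀ hγ₀
        rw [ee_coe, if_pos rfl] at this
        norm_num at this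
  | coe γ =>
    have hpure : 𝓝 ((γ : LL)) = pure ((γ : LL)) := by
      rw [OnePoint.nhds_coe_eq, nhds_discrete]
      rfl
    rw [hpure]
    refine le_antisymm ?_ ?_
    · rw [← tendsto_iff_comap]
      exact tendsto_pure_nhds ee _
    · intro s hs
      simp only [Filter.mem_pure] at hs
      have hopen : (fun w : Γt → ℝ => w γ) ⁻¹' ({(0:ℝ)}ᶜ) ∈ 𝓝 (ee (γ : LL)) := by
        refine (continuous_apply γ).continuousAt.preimage_mem_nhds ?_
        rw [show ee (γ : LL) γ = 1 from by rw [ee_coe, if_pos rfl]]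
        exact isOpen_compl_singleton.mem_nhds (by norm_num)
      refine mem_of_superset (preimage_mem_comap hopen) ?_
      intro ℓ hℓ
      cases ℓ with
      | none => exact absurd (show ee (∞ : LL) γ = 0 from rfl) hℓ
      | some γ' =>
        have h1 : (if γ' = γ then (1:ℝ) else 0) ∈ ({(0:ℝ)}ᶜ : Set ℝ) := hℓ
        rw [Set.mem_compl_iff, Set.mem_singleton_iff] at h1
        by_cases h : γ' = γ
        · rw [h]; exact hs
        · rw [if_neg h] at h1
          exact absurd rfl h1

lemma isKappaCorson_LL : IsKappaCorson Cardinal.aleph0 LL := by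
  refine ⟨inferInstance, inferInstance, Γt, ee, isEmbedding_ee, fun ℓ => ?_⟩
  have hfin : {γ' | ee ℓ γ' ≠ 0}.Finite := by
    induction ℓ using OnePoint.rec with
    | infty =>
      convert Set.finite_empty
      ext γ'
      simp [ee_infty]
    | coe γ =>
      refine (Set.finite_singleton γ).subset ?_
      intro γ' hγ'
      simp only [Set.mem_setOf_eq, ee_coe] at hγ'
      by_cases h : γ = γ'
      · simp [h.symm]
      · rw [if_neg h] at hγ'
        exact absurd rfl hγ'
  exact hfin.lt_aleph0


/-! ## The linear embedding T : Cp(K) → Cp(L) -/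

def tfun (f : KK → ℝ) : LL → ℝ := fun ℓ =>
  match ℓ with
  | none => 0
  | some (Sum.inl x) => f (PX x) - f Pinf
  | some (Sum.inr (Sum.inl n)) => f (PN n) / ((n : ℝ) + 1)
  | some (Sum.inr (Sum.inr _)) => f Pinf

lemma tfun_infty (f : KK → ℝ) : tfun f ∞ = 0 := rfl
lemma tfun_x (f : KK → ℝ) (x : BB) : tfun f ((Sum.inl x : Γt) : LL) = f (PX x) - f Pinf := rfl
lemma tfun_n (f : KK → ℝ) (n : ℕ) :
    tfun f ((Sum.inr (Sum.inl n) : Γt) : LL) = f (PN n) / ((n : ℝ) + 1) := rfl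
lemma tfun_u (f : KK → ℝ) (u : Unit) : tfun f ((Sum.inr (Sum.inr u) : Γt) : LL) = f Pinf := rfl

instance : Nonempty KK := ⟨Pinf⟩

lemma cont_tfun {f : KK → ℝ} (hf : Continuous f) : Continuous (tfun f) := by
  rw [OnePoint.continuous_iff_from_discrete]
  rw [tfun_infty, Metric.tendsto_nhds]
  intro ε hε
  rw [Filter.eventually_cofinite]
  -- bound for f
  obtain ⟨z₀, -, hz₀⟩ := isCompact_univ.exists_isMaxOn (Set.univ_nonempty)
    (hf.abs.continuousOn : ContinuousOn (fun z => |f z|) Set.univ)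
  set M := |f z₀| with hM
  have hMnonneg : 0 ≤ M := abs_nonneg _
  have hbound : ∀ z : KK, |f z| ≤ M := fun z => hz₀ (Set.mem_univ z)
  -- the three pieces
  have h1 : {x : BB | ε ≤ |f (PX x) - f Pinf|}.Finite := finite_big_x hf hε
  have h2 : {n : ℕ | ε ≤ |f (PN n) / ((n : ℝ) + 1)|}.Finite := by
    refine (Set.finite_Iic ⌊M / ε⌋₊).subset ?_
    intro n hn
    simp only [Set.mem_setOf_eq] at hn
    have hpos : (0:ℝ) < (n : ℝ) + 1 := by positivity
    rw [abs_div, abs_of_pos hpos] at hn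
    have h3 : ε * ((n : ℝ) + 1) ≤ |f (PN n)| := (le_div_iff₀ hpos).1 hn
    have h4 : (n : ℝ) + 1 ≤ M / ε := by
      rw [le_div_iff₀ hε, mul_comm]
      exact h3.trans (hbound _)
    have h5 : (n : ℝ) ≤ M / ε := by linarith
    exact Set.mem_Iic.2 (Nat.le_floor h5)
  have hsub : {γ : Γt | ¬ dist (tfun f (γ : LL)) 0 < ε} ⊆
      (Sum.inl '' {x : BB | ε ≤ |f (PX x) - f Pinf|}) ∪
      ((Sum.inr ∘ Sum.inl) '' {n : ℕ | ε ≤ |f (PN n) / ((n : ℝ) + 1)|}) ∪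
      ((Sum.inr ∘ Sum.inr) '' (Set.univ : Set Unit)) := by
    intro γ hγ
    simp only [Set.mem_setOf_eq, Real.dist_eq, sub_zero, not_lt] at hγ
    match γ with
    | Sum.inl x =>
      left; left
      refine ⟨x, ?_, rfl⟩
      rw [tfun_x] at hγ
      exact hγ
    | Sum.inr (Sum.inl n) =>
      left; right
      refine ⟨n, ?_, rfl⟩
      rw [tfun_n] at hγ
      exact hγ
    | Sum.inr (Sum.inr u) =>
      right
      exact ⟨u, trivial, rfl⟩
  exact (((h1.image _).union (h2.image _)).union ((Set.finite_univ).image _)).subset hsub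

lemma mem_cp {X : Type} [TopologicalSpace X] {g : X → ℝ} :
    g ∈ cpSubmodule X ↔ Continuous g := Iff.rfl

def Tlin : Cp KK →ₗ[ℝ] Cp LL where
  toFun f := ⟨tfun f.1, mem_cp.2 (cont_tfun (mem_cp.1 f.2))⟩
  map_add' f g := by
    apply Subtype.ext
    funext ℓ
    show tfun (f.1 + g.1) ℓ = tfun f.1 ℓ + tfun g.1 ℓ
    match ℓ with
    | none => simp [tfun]
    | some (Sum.inl x) => simp [tfun]; ring
    | some (Sum.inr (Sum.inl n)) => simp [tfun]; ring
    | some (Sum.inr (Sum.inr u)) => simp [tfun]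
  map_smul' c f := by
    apply Subtype.ext
    funext ℓ
    show tfun (c • f.1) ℓ = c * tfun f.1 ℓ
    match ℓ with
    | none => simp [tfun]
    | some (Sum.inl x) => simp [tfun]; ring
    | some (Sum.inr (Sum.inl n)) => simp [tfun]; ring
    | some (Sum.inr (Sum.inr u)) => simp [tfun]

lemma Tlin_apply (f : Cp KK) (ℓ : LL) : (Tlin f).1 ℓ = tfun f.1 ℓ := rfl

lemma cont_Tlin : Continuous Tlin := by
  refine Continuous.subtype_mk (continuous_pi fun ℓ => ?_) _
  match ℓ with
  | none => exact continuous_const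
  | some (Sum.inl x) =>
    exact ((continuous_apply (PX x)).comp continuous_subtype_val).sub
      ((continuous_apply Pinf).comp continuous_subtype_val)
  | some (Sum.inr (Sum.inl n)) =>
    exact ((continuous_apply (PN n)).comp continuous_subtype_val).div_const _
  | some (Sum.inr (Sum.inr u)) =>
    exact (continuous_apply Pinf).comp continuous_subtype_val

lemma inj_Tlin : Function.Injective Tlin := by
  intro f g hfg
  apply Subtype.ext
  funext z
  rcases z.2 with ⟨j, hj⟩ | hz
  · cases j with
    | inl n =>
      have hz : z = PN n := Subtype.ext hj.symm
      subst hz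
      have h1 := congrArg (fun h : Cp LL => h.1 ((Sum.inr (Sum.inl n) : Γt) : LL)) hfg
      have h2 := congrArg (fun h : Cp LL => h.1 ((Sum.inr (Sum.inr () ) : Γt) : LL)) hfg
      simp only [Tlin_apply, tfun_n, tfun_u] at h1 h2
      have hpos : ((n : ℝ) + 1) ≠ 0 := by positivity
      field_simp at h1
      exact h1
    | inr x =>
      have hz : z = PX x := Subtype.ext hj.symm
      subst hz
      have h1 := congrArg (fun h : Cp LL => h.1 ((Sum.inl x : Γt) : LL)) hfg
      have h2 := congrArg (fun h : Cp LL => h.1 ((Sum.inr (Sum.inr ()) : Γt) : LL)) hfg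
      simp only [Tlin_apply, tfun_x, tfun_u] at h1 h2
      have := congrArg₂ (fun a b => a + b) h1 h2
      simpa using this
  · have hz' : z = Pinf := Subtype.ext hz
    subst hz'
    have h2 := congrArg (fun h : Cp LL => h.1 ((Sum.inr (Sum.inr ()) : Γt) : LL)) hfg
    simpa only [Tlin_apply, tfun_u] using h2

lemma inducing_Tlin : Topology.IsInducing Tlin := by
  constructor
  refine le_antisymm (continuous_iff_le_induced.1 cont_Tlin) ?_
  -- rewrite the subtype topology on Cp KK as an infimum
  have hKK : (instTopologicalSpaceSubtype : TopologicalSpace (Cp KK)) =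
      ⨅ z : KK, TopologicalSpace.induced (fun f : Cp KK => f.1 z) inferInstance := by
    show TopologicalSpace.induced (Subtype.val) (Pi.topologicalSpace) = _
    have hpi : (Pi.topologicalSpace : TopologicalSpace (KK → ℝ)) =
        ⨅ z : KK, TopologicalSpace.induced (fun g : KK → ℝ => g z) inferInstance := rfl
    rw [hpi, induced_iInf]
    congr 1
    funext z
    rw [induced_compose]
    rfl
  rw [hKK]
  refine le_iInf fun z => ?_
  letI tI : TopologicalSpace (Cp KK) := TopologicalSpace.induced Tlin inferInstance
  suffices hF : @Continuous _ _ tI _ (fun f : Cp KK => f.1 z) by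
    exact continuous_iff_le_induced.mp hF
  have hT : @Continuous _ _ tI _ Tlin := continuous_induced_dom
  have hev : ∀ ℓ : LL, @Continuous _ _ tI _ (fun f : Cp KK => (Tlin f).1 ℓ) := fun ℓ =>
    ((continuous_apply ℓ).comp continuous_subtype_val).comp hT
  rcases z.2 with ⟨j, hj⟩ | hz
  · cases j with
    | inl n =>
      have hz : z = PN n := Subtype.ext hj.symm
      subst hz
      have heq : (fun f : Cp KK => f.1 (PN n)) =
          (fun f : Cp KK => ((n : ℝ) + 1) * (Tlin f).1 ((Sum.inr (Sum.inl n) : Γt) : LL)) := by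
        funext f
        rw [Tlin_apply, tfun_n]
        have hpos : ((n : ℝ) + 1) ≠ 0 := by positivity
        field_simp
      rw [heq]
      exact Continuous.mul (@continuous_const _ _ tI _ ((n:ℝ)+1)) (hev _)
    | inr x =>
      have hz : z = PX x := Subtype.ext hj.symm
      subst hz
      have heq : (fun f : Cp KK => f.1 (PX x)) =
          (fun f : Cp KK => (Tlin f).1 ((Sum.inl x : Γt) : LL) +
            (Tlin f).1 ((Sum.inr (Sum.inr ()) : Γt) : LL)) := by
        funext f
        rw [Tlin_apply, Tlin_apply, tfun_x, tfun_u]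
        ring
      rw [heq]
      exact Continuous.add (hev _) (hev _)
  · have hz' : z = Pinf := Subtype.ext hz
    subst hz'
    have heq : (fun f : Cp KK => f.1 Pinf) =
        (fun f : Cp KK => (Tlin f).1 ((Sum.inr (Sum.inr ()) : Γt) : LL)) := by
      funext f
      rw [Tlin_apply, tfun_u]
    rw [heq]
    exact hev _

lemma isEmbedding_Tlin : Topology.IsEmbedding Tlin := ⟨inducing_Tlin, inj_Tlin⟩


/-! ## K is not Eberlein compact -/

instance : Uncountable BB := by
  rw [← Cardinal.aleph0_lt_mk_iff]
  calc Cardinal.aleph0 < 2 ^ Cardinal.aleph0 := Cardinal.cantor _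
  _ = Cardinal.mk (ℕ → Bool) := by rw [Cardinal.mk_arrow]; simp

lemma PX_ne_Pinf (x : BB) : PX x ≠ Pinf := by
  intro h
  exact pp_ne_zero (Sum.inr x) (congrArg Subtype.val h)

lemma not_eberlein : ¬ IsEberleinCompact KK := by
  rintro ⟨-, -, Γ₀, f, hemb, hc₀⟩
  have hcont : Continuous f := hemb.continuous
  set Sm : ℕ → Set BB := fun m => {x | ∃ γ, 1 / ((m : ℝ) + 1) ≤ |f (PX x) γ - f Pinf γ|}
    with hSm
  have hcover : (Set.univ : Set BB) ⊆ ⋃ m, Sm m := by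
    intro x _
    have hne : f (PX x) ≠ f Pinf := fun h => PX_ne_Pinf x (hemb.injective h)
    obtain ⟨γ, hγ⟩ : ∃ γ, f (PX x) γ ≠ f Pinf γ := by
      by_contra h; push_neg at h; exact hne (funext h)
    have hd : 0 < |f (PX x) γ - f Pinf γ| := by
      rw [abs_pos]; exact sub_ne_zero.2 hγ
    obtain ⟨m, hm⟩ := exists_nat_one_div_lt hd
    exact Set.mem_iUnion.2 ⟨m, γ, le_of_lt hm⟩
  obtain ⟨m, hSmu⟩ : ∃ m, ¬ (Sm m).Countable := by
    by_contra h
    push_neg at h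
    have : (Set.univ : Set BB).Countable :=
      ((Set.countable_iUnion h).mono hcover)
    rw [Set.countable_univ_iff] at this
    exact (not_countable (α := BB)) this
  set ε := 1 / ((m : ℝ) + 1) with hε'
  have hε : 0 < ε := by positivity
  -- selection of coordinates and integers
  have hsel : ∀ x ∈ Sm m, ∃ (n : ℕ) (γ : Γ₀),
      (ε ≤ |f (PX x) γ - f Pinf γ|) ∧ (ε / 2 ≤ |f (PN n) γ - f Pinf γ|) := by
    intro x hx
    obtain ⟨γ, hγ⟩ := hx
    have htt : Tendsto (fun k => |f (PN (br x k)) γ - f Pinf γ|) atTop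
        (𝓝 (|f (PX x) γ - f Pinf γ|)) := by
      have h1 : Tendsto (fun k => f (PN (br x k)) γ) atTop (𝓝 (f (PX x) γ)) :=
        (((continuous_apply γ).comp hcont).tendsto (PX x)).comp (tendsto_PN_br x)
      exact ((h1.sub tendsto_const_nhds).abs)
    have hgt : ε / 2 < |f (PX x) γ - f Pinf γ| := lt_of_lt_of_le (by linarith) hγ
    obtain ⟨k, hk⟩ := (htt.eventually (eventually_gt_nhds hgt)).exists
    exact ⟨br x k, γ, hγ, le_of_lt hk⟩
  -- finiteness of coordinate sets for each n
  have hGn : ∀ n : ℕ, {γ : Γ₀ | ε / 2 ≤ |f (PN n) γ - f Pinf γ|}.Finite := by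
    intro n
    have h4 : (0:ℝ) < ε / 4 := by linarith
    refine ((hc₀ (PN n) (ε/4) h4).union (hc₀ Pinf (ε/4) h4)).subset ?_
    intro γ hγ
    simp only [Set.mem_setOf_eq] at hγ
    by_contra hcon
    simp only [Set.mem_union, Set.mem_setOf_eq, not_or, not_le] at hcon
    have := abs_sub (f (PN n) γ) (f Pinf γ)
    have habs : |f (PN n) γ - f Pinf γ| ≤ |f (PN n) γ| + |f Pinf γ| := abs_sub _ _
    linarith [hcon.1, hcon.2]
  -- fibers over a fixed coordinate are finite
  have hfib : ∀ γ : Γ₀, {x : BB | ε ≤ |f (PX x) γ - f Pinf γ|}.Finite := by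
    intro γ
    exact finite_big_x ((continuous_apply γ).comp hcont) hε
  -- now the counting argument
  have hsub : Sm m ⊆ ⋃ n : ℕ, ⋃ γ ∈ {γ : Γ₀ | ε / 2 ≤ |f (PN n) γ - f Pinf γ|},
      {x : BB | ε ≤ |f (PX x) γ - f Pinf γ|} := by
    intro x hx
    obtain ⟨n, γ, h1, h2⟩ := hsel x hx
    exact Set.mem_iUnion.2 ⟨n, Set.mem_iUnion.2 ⟨γ, Set.mem_iUnion.2 ⟨h2, h1⟩⟩⟩
  have hcnt : (⋃ n : ℕ, ⋃ γ ∈ {γ : Γ₀ | ε / 2 ≤ |f (PN n) γ - f Pinf γ|},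
      {x : BB | ε ≤ |f (PX x) γ - f Pinf γ|}).Countable := by
    refine Set.countable_iUnion fun n => ?_
    exact ((hGn n).biUnion (fun γ _ => hfib γ)).countable
  exact hSmu ((hcnt.mono hsub))


end

/-- There exist a compact Hausdorff space `K` and an ω-Corson compact space `L` such
that there is a linear map `T : C_p(K) → C_p(L)` which is a homeomorphism onto its
image, but `K` is not Eberlein compact. -/
theorem stmt14 :
    ∃ (K L : Type) (tK : TopologicalSpace K) (tL : TopologicalSpace L),
      letI := tK
      letI := tL
      CompactSpace K ∧ T2Space K ∧ IsKappaCorson Cardinal.aleph0 L ∧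
        (∃ T : Cp K →ₗ[ℝ] Cp L, Topology.IsEmbedding T) ∧
        ¬ IsEberleinCompact K := by
  exact ⟨KK, LL, inferInstance, inferInstance, inferInstance, inferInstance,
    isKappaCorson_LL, ⟨Tlin, isEmbedding_Tlin⟩, not_eberlein⟩
end

section
/- Let κ be a regular uncountable cardinal and λ a cardinal with λ > κ. Let F ⊆ L_κ(λ)^ω be a closed subset, and let A ⊆ L_κ(λ) be a subset such that ∞ ∈ A and |A| ≥ κ. Then there exists B ⊆ L_κ(λ) such that A ⊆ B, |B| = |A|, and R_B(F) ⊆ F. -/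
universe u

/-- The underlying set of the space `L_κ(λ)`: the disjoint union of `Λ` (a set of
cardinality `λ`) and the point `∞` (here `none`). -/
def LSpace (κ : Cardinal.{u}) (Λ : Type u) : Type u := Option Λ

/-- The distinguished point `∞` of `L_κ(λ)`. -/
def LSpace.infty (κ : Cardinal.{u}) (Λ : Type u) : LSpace κ Λ := none

/-- The inclusion of `Λ` (the isolated points) into `L_κ(λ)`. -/
def LSpace.mk (κ : Cardinal.{u}) {Λ : Type u} (a : Λ) : LSpace κ Λ := some a

/-- The topology of `L_κ(λ)`: every point of `Λ` is isolated, and the neighbourhoods of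
`∞` are the sets containing `∞` whose complement in `Λ` has cardinality `< κ`.
(For infinite `κ`, the generating family is already a topology.) -/
instance (κ : Cardinal.{u}) (Λ : Type u) : TopologicalSpace (LSpace κ Λ) :=
  TopologicalSpace.generateFrom
    {U : Set (LSpace κ Λ) |
      LSpace.infty κ Λ ∈ U → Cardinal.mk ↥{a : Λ | LSpace.mk κ a ∉ U} < κ}

open Classical in
/-- The retraction `r_B : L_κ(λ) → B` sending `x` to itself if `x ∈ B` and to `∞`
otherwise. -/
noncomputable def lretr {κ : Cardinal.{u}} {Λ : Type u}
    (B : Set (LSpace κ Λ)) (x : LSpace κ Λ) : LSpace κ Λ :=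
  if x ∈ B then x else LSpace.infty κ Λ

open Cardinal Classical

section Aux

variable (κ : Cardinal.{u}) (Λ : Type u) (F : Set (ℕ → LSpace κ Λ))

/-- `z` matches the finite partial function encoded by the list `l`. -/
def LMatches (z : ℕ → LSpace κ Λ) (l : List (ℕ × LSpace κ Λ)) : Prop :=
  ∀ p ∈ l, z p.1 = p.2

/-- `z` avoids `C` (or is `∞`) on coordinates in `s`. -/
def LAvoids (z : ℕ → LSpace κ Λ) (s : List ℕ) (C : Set (LSpace κ Λ)) : Prop :=
  ∀ m ∈ s, z m = LSpace.infty κ Λ ∨ z m ∉ C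

/-- `(l, s)` is bad: some small set `C` cannot be avoided on `s` by members of `F`
matching `l`. -/
def LBad (l : List (ℕ × LSpace κ Λ)) (s : List ℕ) : Prop :=
  ∃ C : Set (LSpace κ Λ), #C < κ ∧ ∀ z ∈ F, LMatches κ Λ z l → ¬ LAvoids κ Λ z s C

/-- A witness small set for a bad pair. -/
noncomputable def LWit (l : List (ℕ × LSpace κ Λ)) (s : List ℕ) : Set (LSpace κ Λ) :=
  if h : LBad κ Λ F l s then h.choose else ∅

lemma LWit_card (hκ : Cardinal.aleph0 ≤ κ) (l : List (ℕ × LSpace κ Λ)) (s : List ℕ) :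
    #(LWit κ Λ F l s) < κ := by
  unfold LWit
  split
  · exact (‹LBad κ Λ F l s›.choose_spec).1
  · simpa using lt_of_lt_of_le aleph0_pos hκ

lemma LWit_spec {l : List (ℕ × LSpace κ Λ)} {s : List ℕ} (h : LBad κ Λ F l s) :
    ∀ z ∈ F, LMatches κ Λ z l → ¬ LAvoids κ Λ z s (LWit κ Λ F l s) := by
  unfold LWit
  rw [dif_pos h]
  exact h.choose_spec.2

/-- One closure step. -/
def LStep (B : Set (LSpace κ Λ)) : Set (LSpace κ Λ) :=
  B ∪ ⋃ p : {l : List (ℕ × LSpace κ Λ) // ∀ q ∈ l, q.2 ∈ B} × List ℕ,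
    LWit κ Λ F p.1.1 p.2

lemma LStep_subset (B : Set (LSpace κ Λ)) : B ⊆ LStep κ Λ F B := Set.subset_union_left

lemma LWit_subset_LStep {B : Set (LSpace κ Λ)} {l : List (ℕ × LSpace κ Λ)}
    (hl : ∀ q ∈ l, q.2 ∈ B) (s : List ℕ) : LWit κ Λ F l s ⊆ LStep κ Λ F B := by
  intro w hw
  exact Or.inr (Set.mem_iUnion.mpr ⟨⟨⟨l, hl⟩, s⟩, hw⟩)

lemma LStep_card (hκ : Cardinal.aleph0 ≤ κ) {B : Set (LSpace κ Λ)} (hB : κ ≤ #B) :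
    #(LStep κ Λ F B) ≤ #B := by
  have hBinf : Cardinal.aleph0 ≤ #B := le_trans hκ hB
  haveI : Infinite ↥B := Cardinal.infinite_iff.mpr hBinf
  have hprod : #(ℕ × ↥B) = #↥B := by
    have h := mk_prod ℕ ↥B
    simp only [mk_nat, lift_aleph0, lift_id, lift_id'] at h
    rw [h]
    exact (mul_eq_max le_rfl hBinf).trans (max_eq_right hBinf)
  haveI : Infinite (ℕ × ↥B) := Cardinal.infinite_iff.mpr (by rw [hprod]; exact hBinf)
  -- the subtype of lists with entries in B has cardinality ≤ #B
  have hsub : #{l : List (ℕ × LSpace κ Λ) // ∀ q ∈ l, q.2 ∈ B} ≤ #↥B := by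
    have hsurj : Function.Surjective
        (fun l' : List (ℕ × ↥B) =>
          (⟨l'.map (fun q => (q.1, q.2.1)), by
            intro q hq
            simp only [List.mem_map] at hq
            obtain ⟨a, _, rfl⟩ := hq
            exact a.2.2⟩ :
            {l : List (ℕ × LSpace κ Λ) // ∀ q ∈ l, q.2 ∈ B})) := by
      rintro ⟨l, hl⟩
      refine ⟨l.attach.map (fun p => (p.1.1, ⟨p.1.2, hl p.1 p.2⟩)), ?_⟩
      ext1
      simp [List.map_map, Function.comp_def, List.attach_map_subtype_val]
    calc #{l : List (ℕ × LSpace κ Λ) // ∀ q ∈ l, q.2 ∈ B}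
        ≤ #(List (ℕ × ↥B)) := mk_le_of_surjective hsurj
      _ = #(ℕ × ↥B) := mk_list_eq_mk _
      _ = #↥B := hprod
  have hidx : #({l : List (ℕ × LSpace κ Λ) // ∀ q ∈ l, q.2 ∈ B} × List ℕ) ≤ #↥B := by
    rw [mk_prod]
    have h1 : Cardinal.lift.{0} #{l : List (ℕ × LSpace κ Λ) // ∀ q ∈ l, q.2 ∈ B}
        ≤ Cardinal.lift.{0} #↥B := lift_le.mpr hsub
    have h2 : (Cardinal.lift.{u} #(List ℕ) : Cardinal.{u}) ≤ Cardinal.aleph0 := by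
      rw [mk_list_eq_mk, mk_nat, lift_aleph0]
    calc Cardinal.lift.{0} #{l : List (ℕ × LSpace κ Λ) // ∀ q ∈ l, q.2 ∈ B} *
          Cardinal.lift.{u} #(List ℕ)
        ≤ #↥B * Cardinal.aleph0 := by
          apply mul_le_mul' _ h2
          simpa using hsub
      _ ≤ #↥B * #↥B := mul_le_mul' le_rfl hBinf
      _ = #↥B := mul_eq_self hBinf
  have hun : #(⋃ p : {l : List (ℕ × LSpace κ Λ) // ∀ q ∈ l, q.2 ∈ B} × List ℕ,
      LWit κ Λ F p.1.1 p.2) ≤ #↥B := by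
    calc #(⋃ p : {l : List (ℕ × LSpace κ Λ) // ∀ q ∈ l, q.2 ∈ B} × List ℕ,
          LWit κ Λ F p.1.1 p.2)
        ≤ #({l : List (ℕ × LSpace κ Λ) // ∀ q ∈ l, q.2 ∈ B} × List ℕ) *
          ⨆ p : {l : List (ℕ × LSpace κ Λ) // ∀ q ∈ l, q.2 ∈ B} × List ℕ,
            #(LWit κ Λ F p.1.1 p.2) := mk_iUnion_le _
      _ ≤ #↥B * κ := by
          apply mul_le_mul' hidx
          exact ciSup_le' fun p => (LWit_card κ Λ F hκ p.1.1 p.2).le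
      _ ≤ #↥B * #↥B := mul_le_mul' le_rfl hB
      _ = #↥B := mul_eq_self hBinf
  calc #(LStep κ Λ F B) ≤ #↥B + _ := mk_union_le _ _
    _ ≤ #↥B + #↥B := add_le_add le_rfl hun
    _ = #↥B := add_eq_self hBinf

/-- The increasing chain of closures starting at `A`. -/
def LChain (A : Set (LSpace κ Λ)) : ℕ → Set (LSpace κ Λ)
  | 0 => A
  | n + 1 => LStep κ Λ F (LChain A n)

end Aux

/-- A finite union of sets of size `< κ` has size `< κ`. -/
lemma mk_finsetUnion_lt {α : Type u} {κ : Cardinal.{u}} (hκ : Cardinal.aleph0 ≤ κ)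
    (t : Finset ℕ) (g : ℕ → Set α) (h : ∀ i ∈ t, #(g i) < κ) :
    #(⋃ i ∈ t, g i) < κ := by
  classical
  induction t using Finset.induction with
  | empty => simpa using lt_of_lt_of_le Cardinal.aleph0_pos hκ
  | insert a t' hns ih =>
    rw [Finset.set_biUnion_insert]
    refine lt_of_le_of_lt (Cardinal.mk_union_le _ _) (Cardinal.add_lt_of_lt hκ ?_ ?_)
    · exact h a (Finset.mem_insert_self _ _)
    · exact ih fun i hi => h i (Finset.mem_insert_of_mem hi)

/-- Open sets containing `∞` have small complement. -/
lemma isOpen_small {κ : Cardinal.{u}} {Λ : Type u} (hκ : Cardinal.aleph0 ≤ κ)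
    {U : Set (LSpace κ Λ)} (hU : IsOpen U) (hinf : LSpace.infty κ Λ ∈ U) :
    Cardinal.mk ↥{a : Λ | LSpace.mk κ a ∉ U} < κ := by
  have hgen : TopologicalSpace.GenerateOpen
      {V : Set (LSpace κ Λ) |
        LSpace.infty κ Λ ∈ V → Cardinal.mk ↥{a : Λ | LSpace.mk κ a ∉ V} < κ} U := hU
  clear hU
  revert hinf
  induction hgen with
  | basic V hV => exact hV
  | univ =>
    intro _
    have : {a : Λ | LSpace.mk κ a ∉ (Set.univ : Set (LSpace κ Λ))} = ∅ := by simp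
    rw [this]
    simpa using lt_of_lt_of_le Cardinal.aleph0_pos hκ
  | inter V W hV hW ihV ihW =>
    intro hinf
    have h1 := ihV hinf.1
    have h2 := ihW hinf.2
    have : {a : Λ | LSpace.mk κ a ∉ V ∩ W} ⊆
        {a : Λ | LSpace.mk κ a ∉ V} ∪ {a : Λ | LSpace.mk κ a ∉ W} := by
      intro a ha
      by_cases h : LSpace.mk κ a ∈ V
      · right; intro hw; exact ha ⟨h, hw⟩
      · left; exact h
    exact lt_of_le_of_lt (le_trans (Cardinal.mk_le_mk_of_subset this)
      (Cardinal.mk_union_le _ _)) (Cardinal.add_lt_of_lt hκ h1 h2)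
  | sUnion S hS ih =>
    intro hinf
    obtain ⟨V, hVS, hV⟩ := hinf
    refine lt_of_le_of_lt (Cardinal.mk_le_mk_of_subset ?_) (ih V hVS hV)
    intro a ha hv
    exact ha ⟨V, hVS, hv⟩

/-- Let `κ` be a regular uncountable cardinal and `λ > κ`. Let `F ⊆ L_κ(λ)^ω` be closed
and `A ⊆ L_κ(λ)` with `∞ ∈ A` and `|A| ≥ κ`. Then there is `B ⊆ L_κ(λ)` with `A ⊆ B`,
`|B| = |A|` and `R_B(F) ⊆ F`, where `R_B` applies `r_B` in every coordinate. -/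
theorem stmt15 (κ : Cardinal.{u}) (hreg : κ.IsRegular) (hunc : Cardinal.aleph0 < κ)
    (Λ : Type u) (hΛ : κ < Cardinal.mk Λ)
    (F : Set (ℕ → LSpace κ Λ)) (hF : IsClosed F)
    (A : Set (LSpace κ Λ)) (hinfty : LSpace.infty κ Λ ∈ A)
    (hAcard : κ ≤ Cardinal.mk ↥A) :
    ∃ B : Set (LSpace κ Λ), A ⊆ B ∧ Cardinal.mk ↥B = Cardinal.mk ↥A ∧
      ∀ x ∈ F, (fun n => lretr B (x n)) ∈ F := by
  classical
  have hκ : Cardinal.aleph0 ≤ κ := hunc.le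
  have hAinf : Cardinal.aleph0 ≤ #↥A := le_trans hκ hAcard
  set B : Set (LSpace κ Λ) := ⋃ n, LChain κ Λ F A n with hBdef
  have hchain0 : LChain κ Λ F A 0 = A := rfl
  have hchain_card : ∀ n, #(LChain κ Λ F A n) = #↥A := by
    intro n
    induction n with
    | zero => rfl
    | succ n ih =>
      refine le_antisymm ?_ ?_
      · rw [← ih]; exact LStep_card κ Λ F hκ (by rw [ih]; exact hAcard)
      · rw [← ih]
        exact Cardinal.mk_le_mk_of_subset (LStep_subset κ Λ F _)
  have hchain_mono : ∀ m n, m ≤ n → LChain κ Λ F A m ⊆ LChain κ Λ F A n := by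
    intro m n
    induction n with
    | zero =>
      intro hmn
      have : m = 0 := Nat.le_zero.mp hmn
      subst this; exact Set.Subset.rfl
    | succ n ih =>
      intro hmn
      rcases Nat.lt_or_ge m (n + 1) with h | h
      · exact le_trans (ih (Nat.lt_succ_iff.mp h)) (LStep_subset κ Λ F _)
      · have : m = n + 1 := le_antisymm hmn h
        subst this; exact Set.Subset.rfl
  have hAB : A ⊆ B := by
    rw [hBdef, ← hchain0]; exact Set.subset_iUnion (LChain κ Λ F A) 0
  have hinftyB : LSpace.infty κ Λ ∈ B := hAB hinfty
  refine ⟨B, hAB, ?_, ?_⟩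
  · -- cardinality
    refine le_antisymm ?_ (Cardinal.mk_le_mk_of_subset hAB)
    have hre : B = ⋃ n : ULift.{u} ℕ, LChain κ Λ F A n.down := by
      apply Set.ext; intro w
      simp only [hBdef, Set.mem_iUnion]
      exact ⟨fun ⟨n, hn⟩ => ⟨⟨n⟩, hn⟩, fun ⟨n, hn⟩ => ⟨n.down, hn⟩⟩
    rw [hre]
    calc #(⋃ n : ULift.{u} ℕ, LChain κ Λ F A n.down)
        ≤ #(ULift.{u} ℕ) * ⨆ n : ULift.{u} ℕ, #(LChain κ Λ F A n.down) :=
          Cardinal.mk_iUnion_le _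
      _ ≤ Cardinal.aleph0 * #↥A := by
          apply mul_le_mul'
          · simp
          · exact ciSup_le' fun n => (hchain_card n.down).le
      _ ≤ #↥A * #↥A := mul_le_mul' hAinf le_rfl
      _ = #↥A := Cardinal.mul_eq_self hAinf
  · -- main property
    intro x hx
    set y : ℕ → LSpace κ Λ := fun n => lretr B (x n) with hy
    have hyF : y ∈ closure F := by
      rw [mem_closure_iff]
      intro U hUopen hyU
      obtain ⟨I, u, hu, hpi⟩ := isOpen_pi_iff.mp hUopen y hyU
      -- the list encoding the coordinates fixed in B
      set l : List (ℕ × LSpace κ Λ) :=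
        (I.filter (fun i => x i ∈ B)).toList.map (fun i => (i, x i)) with hl
      set s : List ℕ := (I.filter (fun i => x i ∉ B)).toList with hs
      have hlB : ∀ q ∈ l, q.2 ∈ B := by
        intro q hq
        simp only [hl, List.mem_map, Finset.mem_toList, Finset.mem_filter] at hq
        obtain ⟨i, ⟨_, hi⟩, rfl⟩ := hq
        exact hi
      have hxl : LMatches κ Λ x l := by
        intro q hq
        simp only [hl, List.mem_map, Finset.mem_toList, Finset.mem_filter] at hq
        obtain ⟨i, _, rfl⟩ := hq
        rfl
      -- l's entries lie in some finite stage
      have hstage : ∀ l' : List (ℕ × LSpace κ Λ), (∀ q ∈ l', q.2 ∈ B) →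
          ∃ k, ∀ q ∈ l', q.2 ∈ LChain κ Λ F A k := by
        intro l'
        induction l' with
        | nil => exact fun _ => ⟨0, by simp⟩
        | cons q l' ih =>
          intro hmem
          obtain ⟨k1, hk1⟩ := ih (fun q hq => hmem q (List.mem_cons_of_mem _ hq))
          have hqB : q.2 ∈ B := hmem q List.mem_cons_self
          obtain ⟨k2, hk2⟩ : ∃ k2, q.2 ∈ LChain κ Λ F A k2 := by
            simpa [hBdef, Set.mem_iUnion] using hqB
          refine ⟨max k1 k2, ?_⟩
          intro q' hq'
          rcases List.mem_cons.mp hq' with rfl | hq'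
          · exact hchain_mono _ _ (le_max_right _ _) hk2
          · exact hchain_mono _ _ (le_max_left _ _) (hk1 q' hq')
      obtain ⟨k, hk⟩ := hstage l hlB
      -- (l, s) is not bad
      have hnotbad : ¬ LBad κ Λ F l s := by
        intro hbad
        have hWB : LWit κ Λ F l s ⊆ B := by
          refine le_trans (LWit_subset_LStep κ Λ F hk s) ?_
          rw [hBdef]
          exact le_trans (le_of_eq rfl)
            (Set.subset_iUnion (LChain κ Λ F A) (k + 1))
        refine LWit_spec κ Λ F hbad x hx hxl ?_
        intro m hm
        simp only [hs, Finset.mem_toList, Finset.mem_filter] at hm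
        right
        exact fun hc => hm.2 (hWB hc)
      -- so every small set can be avoided; apply to the union of complements
      rw [LBad] at hnotbad
      push_neg at hnotbad
      set C : Set (LSpace κ Λ) :=
        ⋃ i ∈ I.filter (fun i => x i ∉ B), ((u i)ᶜ \ {LSpace.infty κ Λ}) with hC
      have hCsmall : #C < κ := by
        have : ∀ i ∈ (I.filter (fun i => x i ∉ B) : Finset ℕ),
            #(((u i)ᶜ \ {LSpace.infty κ Λ} : Set (LSpace κ Λ))) < κ := by
          intro i hi
          simp only [Finset.mem_filter] at hi
          have hyiinf : y i = LSpace.infty κ Λ := by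
            simp [hy, lretr, hi.2]
          have hinfui : LSpace.infty κ Λ ∈ u i := hyiinf ▸ (hu i hi.1).2
          have hsmall := isOpen_small hκ (hu i hi.1).1 hinfui
          -- (u i)ᶜ \ {∞} is the image of {a | some a ∉ u i} under some
          have himg : ((u i)ᶜ \ {LSpace.infty κ Λ} : Set (LSpace κ Λ)) =
              (fun a => LSpace.mk κ a) '' {a : Λ | LSpace.mk κ a ∉ u i} := by
            ext w
            constructor
            · rintro ⟨hw1, hw2⟩
              match w with
              | none => exact absurd rfl hw2
              | some a => exact ⟨a, hw1, rfl⟩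
            · rintro ⟨a, ha, rfl⟩
              exact ⟨ha, by simp [LSpace.mk, LSpace.infty]; exact fun h => Option.some_ne_none a (Set.mem_singleton_iff.mp h)⟩
          rw [himg]
          exact lt_of_le_of_lt Cardinal.mk_image_le hsmall
        rw [hC]
        exact mk_finsetUnion_lt hκ _ _ this
      obtain ⟨z, hzF, hzl, hzs⟩ := hnotbad C hCsmall
      refine ⟨z, hpi ?_, hzF⟩
      intro i hiI
      by_cases hiB : x i ∈ B
      · have : (i, x i) ∈ l := by
          simp only [hl, List.mem_map, Finset.mem_toList, Finset.mem_filter]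
          exact ⟨i, ⟨hiI, hiB⟩, rfl⟩
        have := hzl _ this
        simp only at this
        rw [this]
        have : y i = x i := by simp [hy, lretr, hiB]
        rw [← this]
        exact (hu i hiI).2
      · have hyiinf : y i = LSpace.infty κ Λ := by simp [hy, lretr, hiB]
        have hinfui : LSpace.infty κ Λ ∈ u i := hyiinf ▸ (hu i hiI).2
        have his : i ∈ s := by
          simp only [hs, Finset.mem_toList, Finset.mem_filter]
          exact ⟨hiI, hiB⟩
        rcases hzs i his with hzi | hzi
        · rw [hzi]; exact hinfui
        · by_contra hziu
          apply hzi
          rw [hC]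
          refine Set.mem_biUnion (Finset.mem_filter.mpr ⟨hiI, hiB⟩) ?_
          refine ⟨hziu, ?_⟩
          intro hzeq
          simp only [Set.mem_singleton_iff] at hzeq
          rw [hzeq] at hziu
          exact hziu hinfui
    rwa [hF.closure_eq] at hyF
end

section
/- Let κ be a regular uncountable cardinal. Assume that K is a κ-Corson compact space and L is a compact Hausdorff space. If there exists a continuous linear surjection T : C_p(K) → C_p(L), then L is κ-Corson compact as well. -/
universe u

/-- inclusion C(K,ℝ) →ₗ Cp K -/
noncomputable def jmap (X : Type u) [TopologicalSpace X] : C(X, ℝ) →ₗ[ℝ] Cp X where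
  toFun h := ⟨h, h.continuous⟩
  map_add' h g := by ext x; simp
  map_smul' c h := by ext x; simp

lemma jmap_continuous (X : Type u) [TopologicalSpace X] : Continuous (jmap X) := by
  apply Continuous.subtype_mk
  exact continuous_pi fun x => continuous_eval_const x

/-- evaluation at a point as linear functional on Cp -/
noncomputable def evalCp {X : Type u} [TopologicalSpace X] (x : X) : Cp X →ₗ[ℝ] ℝ :=
  (LinearMap.proj x) ∘ₗ (cpSubmodule X).subtype

lemma evalCp_continuous {X : Type u} [TopologicalSpace X] (x : X) :
    Continuous (evalCp x) := (continuous_apply x).comp continuous_subtype_val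

/-- finite support of (pointwise-)continuous linear functionals on Cp -/
lemma cp_functional_finite_support {X : Type u} [TopologicalSpace X]
    (φ : Cp X →ₗ[ℝ] ℝ) (hφ : Continuous φ) :
    ∃ F : Finset X, ∀ g : Cp X, (∀ x ∈ F, (g : X → ℝ) x = 0) → φ g = 0 := by
  have h0 : φ ⁻¹' (Set.Ioo (-1 : ℝ) 1) ∈ nhds (0 : Cp X) := by
    refine (hφ.isOpen_preimage _ isOpen_Ioo).mem_nhds ?_
    simp [Set.mem_Ioo]
  rw [mem_nhds_subtype] at h0
  obtain ⟨V, hV, hVsub⟩ := h0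
  have hV' : V ∈ nhds (0 : X → ℝ) := by simpa using hV
  rw [nhds_pi, Filter.mem_pi] at hV'
  obtain ⟨I, hIfin, t, ht, hsub⟩ := hV'
  refine ⟨hIfin.toFinset, fun g hg => ?_⟩
  have key : ∀ c : ℝ, φ (c • g) ∈ Set.Ioo (-1 : ℝ) 1 := by
    intro c
    apply hVsub
    apply hsub
    intro i hi
    have : (g : X → ℝ) i = 0 := hg i (hIfin.mem_toFinset.2 hi)
    have h2 : ((c • g : Cp X) : X → ℝ) i = 0 := by
      simp [this]
    show ((c • g : Cp X) : X → ℝ) i ∈ t i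
    rw [h2]
    simpa using mem_of_mem_nhds (ht i)
  by_contra hne
  have h2 := key (2 / φ g)
  rw [map_smul, smul_eq_mul, div_mul_cancel₀ 2 hne] at h2
  exact absurd h2.2 (by norm_num)

section Words
variable {K : Type u} {Γ : Type u} [TopologicalSpace K] (e : K → Γ → ℝ) (he : Continuous e)

/-- coordinate function as continuous map -/
def coordCM (γ : Γ) : C(K, ℝ) := ⟨fun k => e k γ, (continuous_apply γ).comp he⟩

/-- monomial associated to a word -/
def wordCM (w : List Γ) : C(K, ℝ) := (w.map (coordCM e he)).prod

lemma wordCM_apply (w : List Γ) (k : K) :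
    wordCM e he w k = (w.map (fun γ => e k γ)).prod := by
  induction w with
  | nil => simp [wordCM]
  | cons a w ih =>
    show ((coordCM e he a) * (w.map (coordCM e he)).prod) k = _
    rw [ContinuousMap.mul_apply]
    have : (w.map (coordCM e he)).prod k = wordCM e he w k := rfl
    rw [this, ih, List.map_cons, List.prod_cons]
    rfl

lemma wordCM_mem_adjoin (w : List Γ) :
    wordCM e he w ∈ Algebra.adjoin ℝ (Set.range (coordCM e he)) := by
  apply Subalgebra.list_prod_mem
  intro x hx
  obtain ⟨γ, _, rfl⟩ := List.mem_map.1 hx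
  exact Algebra.subset_adjoin ⟨γ, rfl⟩

lemma adjoin_subset_span :
    (Algebra.adjoin ℝ (Set.range (coordCM e he)) : Set C(K, ℝ)) ⊆
      (Submodule.span ℝ (Set.range (wordCM e he)) : Set C(K, ℝ)) := by
  intro x hx
  have : x ∈ Subalgebra.toSubmodule (Algebra.adjoin ℝ (Set.range (coordCM e he))) := hx
  rw [Algebra.adjoin_eq_span] at this
  refine Submodule.span_le.2 ?_ this
  intro y hy
  obtain ⟨l, hl, rfl⟩ := Submonoid.exists_list_of_mem_closure hy
  choose gs hgs using fun (a : C(K,ℝ)) (ha : a ∈ l) => hl a ha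
  -- turn l into a word
  apply Submodule.subset_span
  refine ⟨l.attach.map fun a => gs a.1 a.2, ?_⟩
  simp only [wordCM, List.map_map]
  congr 1
  conv_rhs => rw [← List.attach_map_subtype_val l]
  apply List.map_congr_left
  intro a _
  exact hgs a.1 a.2

end Words

/-- Let `κ` be a regular uncountable cardinal, `K` a `κ`-Corson compact space and `L` a
compact Hausdorff space. If there exists a continuous linear surjection
`T : C_p(K) → C_p(L)`, then `L` is `κ`-Corson compact as well. -/
theorem stmt18 (κ : Cardinal.{u}) (hreg : κ.IsRegular) (hunc : Cardinal.aleph0 < κ)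
    (K L : Type u) [TopologicalSpace K] [TopologicalSpace L]
    [CompactSpace L] [T2Space L]
    (hK : IsKappaCorson κ K)
    (T : Cp K →ₗ[ℝ] Cp L) (hTcont : Continuous T) (hTsurj : Function.Surjective T) :
    IsKappaCorson κ L := by
  classical
  obtain ⟨hKc, hKt2, Γ, e, hEmb, hsupp⟩ := hK
  haveI := hKc; haveI := hKt2
  have he : Continuous e := hEmb.continuous
  set Φ : L → List Γ → ℝ :=
    fun l w => ((T (jmap K (wordCM e he w)) : Cp L) : L → ℝ) l with hΦ
  refine ⟨inferInstance, inferInstance, List Γ, Φ, ?_, ?_⟩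
  · -- Φ is an embedding
    have hcont : Continuous Φ :=
      continuous_pi fun w => (T (jmap K (wordCM e he w))).2
    have hinj : Function.Injective Φ := by
      intro l l' hll
      by_contra hne
      set ψ : C(K, ℝ) →ₗ[ℝ] ℝ := (evalCp l - evalCp l') ∘ₗ (T ∘ₗ jmap K) with hψ
      have hψcont : Continuous ψ := by
        have h1 : Continuous fun h : C(K, ℝ) => T (jmap K h) :=
          hTcont.comp (jmap_continuous K)
        exact ((evalCp_continuous l).comp h1).sub ((evalCp_continuous l').comp h1)
      have hker : ∀ h : C(K, ℝ), ψ h = 0 := by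
        have hclosed : IsClosed {h : C(K, ℝ) | ψ h = 0} :=
          isClosed_eq hψcont continuous_const
        have hspan : Submodule.span ℝ (Set.range (wordCM e he)) ≤ LinearMap.ker ψ := by
          rw [Submodule.span_le]
          rintro _ ⟨w, rfl⟩
          have hw := congrFun hll w
          simp only [hΦ] at hw
          simp only [SetLike.mem_coe, LinearMap.mem_ker, hψ, LinearMap.comp_apply,
            LinearMap.sub_apply, evalCp, Submodule.coe_subtype, LinearMap.proj_apply]
          rw [sub_eq_zero]
          exact hw
        have hA : (Algebra.adjoin ℝ (Set.range (coordCM e he)) : Set C(K, ℝ)) ⊆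
            {h | ψ h = 0} := by
          intro x hx
          exact hspan (adjoin_subset_span e he hx)
        have hsep : (Algebra.adjoin ℝ (Set.range (coordCM e he))).SeparatesPoints := by
          intro x y hxy
          have hexy : e x ≠ e y := fun h => hxy (hEmb.injective h)
          obtain ⟨γ, hγ⟩ := Function.ne_iff.1 hexy
          exact ⟨coordCM e he γ, ⟨coordCM e he γ,
            Algebra.subset_adjoin ⟨γ, rfl⟩, rfl⟩, hγ⟩
        have htop :=
          ContinuousMap.subalgebra_topologicalClosure_eq_top_of_separatesPoints
            (Algebra.adjoin ℝ (Set.range (coordCM e he))) hsep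
        intro h
        have hmem : h ∈ (Algebra.adjoin ℝ (Set.range (coordCM e he))).topologicalClosure := by
          rw [htop]; trivial
        have hmem' : h ∈ closure ((Algebra.adjoin ℝ (Set.range (coordCM e he))) :
            Set C(K, ℝ)) := hmem
        exact closure_minimal hA hclosed hmem'
      obtain ⟨u, hu0, hu1, _⟩ := exists_continuous_zero_one_of_isClosed
        (isClosed_singleton (x := l)) (isClosed_singleton (x := l'))
        (by simpa using hne)
      obtain ⟨g, hg⟩ := hTsurj (jmap L u)
      have hgj : jmap K ⟨g.1, g.2⟩ = g := by
        apply Subtype.ext; rfl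
      have h0 := hker ⟨g.1, g.2⟩
      rw [hψ] at h0
      simp only [LinearMap.comp_apply, LinearMap.sub_apply, hgj, hg] at h0
      have hul : evalCp l (jmap L u) = u l := rfl
      have hul' : evalCp l' (jmap L u) = u l' := rfl
      rw [hul, hul', hu0 rfl, hu1 rfl, sub_eq_zero] at h0
      simp at h0
    exact (hcont.isClosedEmbedding hinj).isEmbedding
  · -- small supports
    intro l
    set φ : Cp K →ₗ[ℝ] ℝ := (evalCp l) ∘ₗ T with hφdef
    have hφcont : Continuous φ := (evalCp_continuous l).comp hTcont
    obtain ⟨F, hF⟩ := cp_functional_finite_support φ hφcont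
    set S : Set Γ := ⋃ x ∈ F, {γ | e x γ ≠ 0} with hS
    have hSκ' : ∀ G : Finset K, Cardinal.mk ↥(⋃ x ∈ G, {γ | e x γ ≠ 0}) < κ := by
      intro G
      induction G using Finset.induction_on with
      | empty =>
        simp only [Finset.notMem_empty, Set.iUnion_of_empty, Set.iUnion_empty]
        simpa using Cardinal.aleph0_pos.trans hunc
      | insert _ _ hnotmem ih =>
        rw [Finset.set_biUnion_insert]
        refine lt_of_le_of_lt (Cardinal.mk_union_le _ _) ?_
        exact Cardinal.add_lt_of_lt hreg.aleph0_le (hsupp _) ih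
    have hSκ : Cardinal.mk ↥S < κ := hSκ' F
    have hsubset : {w : List Γ | Φ l w ≠ 0} ⊆ {w : List Γ | ∀ γ ∈ w, γ ∈ S} := by
      intro w hw
      by_contra hcon
      simp only [Set.mem_setOf_eq] at hcon
      push_neg at hcon
      obtain ⟨γ0, hγ0w, hγ0S⟩ := hcon
      apply hw
      show ((T (jmap K (wordCM e he w)) : Cp L) : L → ℝ) l = 0
      have : φ (jmap K (wordCM e he w)) = 0 := by
        apply hF
        intro x hx
        show wordCM e he w x = 0
        rw [wordCM_apply]
        apply List.prod_eq_zero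
        refine List.mem_map.2 ⟨γ0, hγ0w, ?_⟩
        have : γ0 ∉ {γ | e x γ ≠ 0} := fun hmem => hγ0S (Set.mem_biUnion hx hmem)
        simpa using this
      exact this
    have hinj2 : Cardinal.mk ↥{w : List Γ | ∀ γ ∈ w, γ ∈ S} ≤ Cardinal.mk (List ↥S) := by
      refine Cardinal.mk_le_of_injective (f := fun w =>
        List.pmap (fun γ h => (⟨γ, h⟩ : ↥S)) w.1 w.2) ?_
      intro w w' hww
      apply Subtype.ext
      have := congrArg (List.map (Subtype.val : ↥S → Γ)) hww
      simpa [List.map_pmap, List.pmap_eq_map] using this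
    calc Cardinal.mk ↥{w : List Γ | Φ l w ≠ 0}
        ≤ Cardinal.mk ↥{w : List Γ | ∀ γ ∈ w, γ ∈ S} := Cardinal.mk_le_mk_of_subset hsubset
      _ ≤ Cardinal.mk (List ↥S) := hinj2
      _ ≤ max Cardinal.aleph0 (Cardinal.mk ↥S) := Cardinal.mk_list_le_max _
      _ < κ := max_lt hunc hSκ
end
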